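/- arXiv:math/0702663 — 4 statements merged into one kernel-verified Lean document; each statement's English description precedes it below -/
import Mathlib

section
/- For every real number r, every natural number i, and every natural number h with h > i (and h ≥ 1), the h-th derivative of the function t ↦ e^{r t} t^i is the function t ↦ e^{r t} · ∑_{j=0}^{i} (i! · h!)/(j! · (i-j)! · (h-i+j)!) · r^{h-i+j} · t^j. -/
open Finset

private lemma hasDerivAt_E (r : ℝ) (m : ℕ) (t : ℝ) :
    HasDerivAt (fun t : ℝ => Real.exp (r * t) * t ^ m)
      (r * (Real.exp (r * t) * t ^ m) + (m : ℝ) * (Real.exp (r * t) * t ^ (m - 1))) t := by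
  have h1 : HasDerivAt (fun t : ℝ => Real.exp (r * t)) (Real.exp (r * t) * r) t := by
    have : HasDerivAt (fun t : ℝ => r * t) (r * 1) t := (hasDerivAt_id t).const_mul r
    simpa using this.exp
  have := h1.fun_mul (hasDerivAt_pow m t)
  refine this.congr_deriv ?_
  ring

private lemma general_formula (r : ℝ) (i : ℕ) (h : ℕ) :
    iteratedDeriv h (fun t : ℝ => Real.exp (r * t) * t ^ i) =
      fun t : ℝ => ∑ k ∈ range (h + 1),
        ((h.choose k * i.descFactorial k : ℕ) : ℝ) * r ^ (h - k) *
          (Real.exp (r * t) * t ^ (i - k)) := by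
  induction h with
  | zero => funext t; simp
  | succ h ih =>
    rw [iteratedDeriv_succ, ih]
    funext t
    have hD : HasDerivAt
        (fun t : ℝ => ∑ k ∈ range (h + 1),
          ((h.choose k * i.descFactorial k : ℕ) : ℝ) * r ^ (h - k) *
            (Real.exp (r * t) * t ^ (i - k)))
        (∑ k ∈ range (h + 1),
          ((h.choose k * i.descFactorial k : ℕ) : ℝ) * r ^ (h - k) *
            (r * (Real.exp (r * t) * t ^ (i - k)) +
              ((i - k : ℕ) : ℝ) * (Real.exp (r * t) * t ^ (i - k - 1)))) t := by
      apply HasDerivAt.fun_sum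
      intro k _
      exact (hasDerivAt_E r (i - k) t).const_mul _
    rw [hD.deriv]
    -- split into two sums
    have split : ∀ k ∈ range (h + 1),
        ((h.choose k * i.descFactorial k : ℕ) : ℝ) * r ^ (h - k) *
            (r * (Real.exp (r * t) * t ^ (i - k)) +
              ((i - k : ℕ) : ℝ) * (Real.exp (r * t) * t ^ (i - k - 1)))
        = ((h.choose k * i.descFactorial k : ℕ) : ℝ) * r ^ (h + 1 - k) *
            (Real.exp (r * t) * t ^ (i - k))
          + ((h.choose k * i.descFactorial (k + 1) : ℕ) : ℝ) * r ^ (h - k) *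
            (Real.exp (r * t) * t ^ (i - (k + 1))) := by
      intro k hk
      rw [mem_range] at hk
      have hk' : k ≤ h := by omega
      have e1 : h + 1 - k = (h - k) + 1 := by omega
      have e2 : i - (k + 1) = i - k - 1 := by omega
      rw [e1, e2, Nat.descFactorial_succ]
      push_cast
      ring
    rw [Finset.sum_congr rfl split, Finset.sum_add_distrib]
    -- now handle RHS
    have rhs : ∑ k ∈ range (h + 2),
        (((h + 1).choose k * i.descFactorial k : ℕ) : ℝ) * r ^ (h + 1 - k) *
          (Real.exp (r * t) * t ^ (i - k))
        = ∑ k ∈ range (h + 1),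
            ((h.choose k * i.descFactorial k : ℕ) : ℝ) * r ^ (h + 1 - k) *
              (Real.exp (r * t) * t ^ (i - k))
          + ∑ k ∈ range (h + 1),
            ((h.choose k * i.descFactorial (k + 1) : ℕ) : ℝ) * r ^ (h - k) *
              (Real.exp (r * t) * t ^ (i - (k + 1))) := by
      rw [Finset.sum_range_succ' _ (h + 1)]
      have pascal : ∀ k ∈ range (h + 1),
          (((h + 1).choose (k + 1) * i.descFactorial (k + 1) : ℕ) : ℝ) * r ^ (h + 1 - (k + 1)) *
            (Real.exp (r * t) * t ^ (i - (k + 1)))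
          = ((h.choose (k + 1) * i.descFactorial (k + 1) : ℕ) : ℝ) * r ^ (h + 1 - (k + 1)) *
              (Real.exp (r * t) * t ^ (i - (k + 1)))
            + ((h.choose k * i.descFactorial (k + 1) : ℕ) : ℝ) * r ^ (h - k) *
              (Real.exp (r * t) * t ^ (i - (k + 1))) := by
        intro k _
        rw [Nat.choose_succ_succ]
        have : h + 1 - (k + 1) = h - k := by omega
        rw [this]
        push_cast
        ring
      rw [Finset.sum_congr rfl pascal, Finset.sum_add_distrib]
      have key : ∑ k ∈ range (h + 1),
            ((h.choose (k + 1) * i.descFactorial (k + 1) : ℕ) : ℝ) * r ^ (h + 1 - (k + 1)) *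
              (Real.exp (r * t) * t ^ (i - (k + 1)))
          + (((h + 1).choose 0 * i.descFactorial 0 : ℕ) : ℝ) * r ^ (h + 1 - 0) *
              (Real.exp (r * t) * t ^ (i - 0))
          = ∑ k ∈ range (h + 1),
              ((h.choose k * i.descFactorial k : ℕ) : ℝ) * r ^ (h + 1 - k) *
                (Real.exp (r * t) * t ^ (i - k)) := by
        have := Finset.sum_range_succ' (fun k =>
          ((h.choose k * i.descFactorial k : ℕ) : ℝ) * r ^ (h + 1 - k) *
            (Real.exp (r * t) * t ^ (i - k))) (h + 1)
        rw [Finset.sum_range_succ _ (h + 1)] at this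
        simp only [Nat.choose_succ_self, Nat.zero_mul, Nat.cast_zero, zero_mul,
          add_zero, Nat.choose_zero_right] at this ⊢
        rw [← this]
      rw [add_assoc, add_comm (∑ k ∈ range (h+1),
            ((h.choose k * i.descFactorial (k + 1) : ℕ) : ℝ) * r ^ (h - k) *
              (Real.exp (r * t) * t ^ (i - (k + 1))))]
      rw [← add_assoc, key, add_comm]
    rw [rhs]

/-- Appendix A, second case: for `h > i` (and `h ≥ 1`), the `h`-th derivative of
`t ↦ e^{r t} t^i` equals
`t ↦ e^{r t} ∑_{j=0}^{i} (i! h!)/(j! (i-j)! (h-i+j)!) r^{h-i+j} t^j`. -/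
theorem iteratedDeriv_exp_mul_pow_of_gt (r : ℝ) (i h : ℕ) (h1 : 1 ≤ h) (hhi : i < h) :
    iteratedDeriv h (fun t : ℝ => Real.exp (r * t) * t ^ i) =
      fun t : ℝ => Real.exp (r * t) *
        ∑ j ∈ Finset.Icc 0 i,
          ((i.factorial * h.factorial : ℕ) : ℝ) /
              ((j.factorial * (i - j).factorial * (h + j - i).factorial : ℕ) : ℝ) *
            r ^ (h + j - i) * t ^ j := by
  rw [general_formula]
  funext t
  have hIcc : Finset.Icc 0 i = range (i + 1) := by
    ext x; simp [Nat.lt_succ_iff]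
  rw [hIcc, Finset.mul_sum]
  -- restrict LHS sum to range (i+1)
  rw [show (h + 1) = (i + 1) + (h - i) by omega, Finset.sum_range_add]
  have hz : ∑ k ∈ range (h - i), ((h.choose (i + 1 + k) * i.descFactorial (i + 1 + k) : ℕ) : ℝ) *
      r ^ (h - (i + 1 + k)) * (Real.exp (r * t) * t ^ (i - (i + 1 + k))) = 0 := by
    apply Finset.sum_eq_zero
    intro k _
    rw [Nat.descFactorial_of_lt (by omega)]
    simp
  rw [hz, add_zero]
  rw [← Finset.sum_range_reflect]
  apply Finset.sum_congr rfl
  intro j hj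
  rw [mem_range] at hj
  have hji : j ≤ i := by omega
  have e1 : i + 1 - 1 - j = i - j := by omega
  have e2 : i - (i - j) = j := by omega
  have e3 : h - (i - j) = h + j - i := by omega
  rw [e1, e2, e3]
  have key : (((h.choose (i - j) * i.descFactorial (i - j) : ℕ)) : ℝ) =
      ((i.factorial * h.factorial : ℕ) : ℝ) /
        ((j.factorial * (i - j).factorial * (h + j - i).factorial : ℕ) : ℝ) := by
    have c1 : h.choose (i - j) * ((i - j).factorial * (h + j - i).factorial) = h.factorial := by
      have := Nat.choose_mul_factorial_mul_factorial (show i - j ≤ h by omega)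
      rw [show h - (i - j) = h + j - i by omega] at this
      rw [← this]; ring
    have c2 : j.factorial * i.descFactorial (i - j) = i.factorial := by
      have := Nat.factorial_mul_descFactorial (show i - j ≤ i by omega)
      rw [e2] at this; exact this
    rw [eq_div_iff (by
      exact_mod_cast Nat.cast_ne_zero.mpr (by
        simp [Nat.factorial_ne_zero, Nat.mul_ne_zero]))]
    have : h.choose (i - j) * i.descFactorial (i - j) *
        (j.factorial * (i - j).factorial * (h + j - i).factorial) =
        i.factorial * h.factorial := by
      rw [← c1, ← c2]; ring
    exact_mod_cast congrArg (Nat.cast : ℕ → ℝ) this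
  rw [key]
  ring
end

section
/- Let m ≥ 1, let a : ℕ → ℝ with a(m) ≠ 0, and suppose the characteristic polynomial p(X) = ∑_{h=1}^{m} a(h) X^h has m pairwise distinct real roots r_1, …, r_m. Let Q_1, …, Q_m be real polynomials and let g(t) = ∑_{p=1}^{m} e^{r_p t} Q_p(t). Then for every τ ∈ ℝ and every prescribed vector (v_0, …, v_{m-1}) ∈ ℝ^m there exist real polynomials P_1, …, P_m with deg P_p ≤ deg Q_p + 1 for each p, such that the function y(t) = ∑_{p=1}^{m} e^{r_p t} P_p(t) satisfies ∑_{h=1}^{m} a(h) · y^{(h)}(t) = g(t) for all t ∈ ℝ and y^{(h)}(τ) = v_h for h = 0, …, m-1. -/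
open Polynomial Finset

noncomputable def stepsD : Module.End ℝ (Polynomial ℝ) := Polynomial.derivative

noncomputable def stepsU (r : ℝ) : Module.End ℝ (Polynomial ℝ) :=
  algebraMap ℝ _ r + stepsD

lemma stepsU_apply (r : ℝ) (P : Polynomial ℝ) :
    stepsU r P = r • P + derivative P := by
  simp [stepsU, stepsD, Module.algebraMap_end_apply]

lemma steps_hasDerivAt (r : ℝ) (P : Polynomial ℝ) (t : ℝ) :
    HasDerivAt (fun s : ℝ => Real.exp (r * s) * P.eval s)
      (Real.exp (r * t) * ((stepsU r) P).eval t) t := by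
  have h1 : HasDerivAt (fun s : ℝ => Real.exp (r * s)) (Real.exp (r * t) * r) t := by
    simpa using ((hasDerivAt_id t).const_mul r).exp
  have h2 := P.hasDerivAt t
  have h3 := h1.fun_mul h2
  refine h3.congr_deriv ?_
  simp only [stepsU_apply, eval_add, eval_smul, smul_eq_mul]
  ring

lemma steps_iteratedDeriv {m : ℕ} (r : Fin m → ℝ) (P : Fin m → Polynomial ℝ) (n : ℕ) :
    iteratedDeriv n (fun s : ℝ => ∑ p : Fin m, Real.exp (r p * s) * (P p).eval s)
      = fun t => ∑ p : Fin m, Real.exp (r p * t) * ((stepsU (r p) ^ n) (P p)).eval t := by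
  induction n with
  | zero => simp
  | succ n ih =>
      rw [iteratedDeriv_succ, ih]
      funext t
      rw [deriv_fun_sum (fun p _ => (steps_hasDerivAt (r p) _ t).differentiableAt)]
      refine Finset.sum_congr rfl fun p _ => ?_
      rw [(steps_hasDerivAt (r p) _ t).deriv, pow_succ', Module.End.mul_apply]

lemma stepsU_pow_C (r γ : ℝ) (n : ℕ) :
    (stepsU r ^ n) (C γ) = C (r ^ n * γ) := by
  induction n with
  | zero => simp
  | succ n ih =>
      rw [pow_succ', Module.End.mul_apply, ih, stepsU_apply, derivative_C, add_zero,
        smul_C, smul_eq_mul, ← mul_assoc, ← pow_succ']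

lemma steps_aeval_apply (m : ℕ) (a : ℕ → ℝ) (u : Module.End ℝ (Polynomial ℝ))
    (P : Polynomial ℝ) :
    (aeval u (∑ h ∈ Icc 1 m, C (a h) * X ^ h)) P = ∑ h ∈ Icc 1 m, a h • (u ^ h) P := by
  rw [map_sum, LinearMap.sum_apply]
  refine sum_congr rfl fun h _ => ?_
  simp [map_mul, aeval_C, map_pow, aeval_X, Module.End.mul_apply,
    Module.algebraMap_end_apply]

lemma steps_taylor (m : ℕ) (pp : Polynomial ℝ) (hdeg : pp.natDegree ≤ m) (ρ : ℝ) :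
    aeval (stepsU ρ) pp = ∑ i ∈ range (m+1), (taylor ρ pp).coeff i • (stepsD ^ i) := by
  conv_lhs => rw [← sum_taylor_eq pp ρ]
  rw [Polynomial.sum_over_range' _ (by simp) (m+1) (by rw [natDegree_taylor]; omega), map_sum]
  refine sum_congr rfl fun i _ => ?_
  have hsub : stepsU ρ - algebraMap ℝ (Module.End ℝ (Polynomial ℝ)) ρ = stepsD := by
    rw [stepsU, add_sub_cancel_left]
  rw [map_mul, aeval_C, map_pow, map_sub, aeval_X, aeval_C, hsub, ← Algebra.smul_def]

noncomputable def stepsAntider (Q : Polynomial ℝ) : Polynomial ℝ :=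
  ∑ k ∈ range (Q.natDegree + 1), C (Q.coeff k / (k+1)) * X ^ (k+1)

lemma stepsAntider_deriv (Q : Polynomial ℝ) : derivative (stepsAntider Q) = Q := by
  rw [stepsAntider, map_sum]
  conv_rhs => rw [Q.as_sum_range_C_mul_X_pow]
  refine sum_congr rfl fun k _ => ?_
  rw [derivative_C_mul_X_pow]
  simp only [Nat.add_sub_cancel]
  congr 1
  push_cast
  field_simp

lemma stepsAntider_natDegree (Q : Polynomial ℝ) :
    (stepsAntider Q).natDegree ≤ Q.natDegree + 1 := by
  refine natDegree_sum_le_of_forall_le _ _ fun k hk => ?_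
  refine (natDegree_C_mul_le _ _).trans ?_
  rw [natDegree_X_pow]
  exact add_le_add_left (Nat.lt_succ_iff.mp (mem_range.mp hk)) 1

lemma steps_surj_aux (N : ℕ) (hN : 1 ≤ N) (c : ℕ → ℝ) (hc0 : c 0 = 0) (hc1 : c 1 ≠ 0)
    (Q : Polynomial ℝ) :
    ∑ i ∈ range (N + 1), c i • derivative^[i] (C (c 1)⁻¹ * stepsAntider Q)
      = Q + ∑ i ∈ Ico 2 (N + 1), c i • derivative^[i] (C (c 1)⁻¹ * stepsAntider Q) := by
  have hsplit : range (N + 1) = insert 0 (insert 1 (Ico 2 (N + 1))) := by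
    ext x
    simp only [mem_range, mem_insert, mem_Ico]
    omega
  rw [hsplit, sum_insert (by simp), sum_insert (by simp)]
  have h0 : c 0 • derivative^[0] (C (c 1)⁻¹ * stepsAntider Q) = 0 := by
    rw [hc0, zero_smul]
  have h1 : c 1 • derivative^[1] (C (c 1)⁻¹ * stepsAntider Q) = Q := by
    rw [Function.iterate_one, derivative_C_mul, stepsAntider_deriv, smul_eq_C_mul,
      ← mul_assoc, ← C_mul, mul_inv_cancel₀ hc1, C_1, one_mul]
  rw [h0, h1, zero_add]

lemma steps_surj (N : ℕ) (hN : 1 ≤ N) (c : ℕ → ℝ) (hc0 : c 0 = 0) (hc1 : c 1 ≠ 0) :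
    ∀ n (Q : Polynomial ℝ), Q.natDegree ≤ n →
      ∃ P : Polynomial ℝ, P.natDegree ≤ n + 1 ∧
        ∑ i ∈ range (N + 1), c i • derivative^[i] P = Q := by
  intro n
  induction n with
  | zero =>
      intro Q hQ
      refine ⟨C (c 1)⁻¹ * stepsAntider Q, ?_, ?_⟩
      · exact (natDegree_C_mul_le _ _).trans ((stepsAntider_natDegree Q).trans (by omega))
      · rw [steps_surj_aux N hN c hc0 hc1 Q]
        have : ∑ i ∈ Ico 2 (N + 1), c i • derivative^[i] (C (c 1)⁻¹ * stepsAntider Q) = 0 := by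
          refine sum_eq_zero fun i hi => ?_
          have hdeg : (C (c 1)⁻¹ * stepsAntider Q).natDegree < i := by
            have := (natDegree_C_mul_le ((c 1)⁻¹) (stepsAntider Q)).trans
              (stepsAntider_natDegree Q)
            have := mem_Ico.mp hi
            omega
          rw [iterate_derivative_eq_zero hdeg, smul_zero]
        rw [this, add_zero]
  | succ n ih =>
      intro Q hQ
      set P₀ := C (c 1)⁻¹ * stepsAntider Q with hP₀
      have hP₀deg : P₀.natDegree ≤ n + 2 := by
        have h := (natDegree_C_mul_le ((c 1)⁻¹) (stepsAntider Q)).trans (stepsAntider_natDegree Q)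
        rw [← hP₀] at h
        omega
      set R := ∑ i ∈ Ico 2 (N + 1), c i • derivative^[i] P₀ with hR
      have hRdeg : R.natDegree ≤ n := by
        refine natDegree_sum_le_of_forall_le _ _ fun i hi => ?_
        refine (natDegree_smul_le _ _).trans ((natDegree_iterate_derivative _ _).trans ?_)
        have := mem_Ico.mp hi
        omega
      obtain ⟨P', hP'deg, hP'eq⟩ := ih R hRdeg
      refine ⟨P₀ - P', ?_, ?_⟩
      · exact (natDegree_sub_le _ _).trans (max_le hP₀deg (by omega))
      · have : ∑ i ∈ range (N + 1), c i • derivative^[i] (P₀ - P')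
            = (∑ i ∈ range (N + 1), c i • derivative^[i] P₀)
              - ∑ i ∈ range (N + 1), c i • derivative^[i] P' := by
          rw [← sum_sub_distrib]
          refine sum_congr rfl fun i _ => ?_
          rw [iterate_derivative_sub, smul_sub]
        rw [this, steps_surj_aux N hN c hc0 hc1 Q, ← hR, hP'eq, add_sub_cancel_right]

lemma steps_char (m : ℕ) (hm : 1 ≤ m) (a : ℕ → ℝ) (ham : a m ≠ 0)
    (r : Fin m → ℝ) (hr : Function.Injective r)
    (hroot : ∀ p : Fin m, ∑ h ∈ Icc 1 m, a h * r p ^ h = 0) (q : Fin m) :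
    (derivative (∑ h ∈ Icc 1 m, C (a h) * X ^ h : Polynomial ℝ)).eval (r q) ≠ 0 := by
  classical
  set pp : Polynomial ℝ := ∑ h ∈ Icc 1 m, C (a h) * X ^ h with hpp
  have heval : ∀ x : ℝ, pp.eval x = ∑ h ∈ Icc 1 m, a h * x ^ h := by
    intro x; simp [hpp, eval_finset_sum]
  set nd := Lagrange.nodal (Finset.univ : Finset (Fin m)) r with hnddef
  have hnd : nd.natDegree = m := by
    rw [hnddef, Lagrange.natDegree_nodal, card_univ, Fintype.card_fin]
  set qq : Polynomial ℝ := C (a m) * nd with hqq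
  have hppdeg : pp.natDegree ≤ m := by
    refine natDegree_sum_le_of_forall_le _ _ fun h hh => ?_
    exact (natDegree_C_mul_le _ _).trans (by rw [natDegree_X_pow]; exact (mem_Icc.mp hh).2)
  have hqqdeg : qq.natDegree ≤ m := (natDegree_C_mul_le _ _).trans (le_of_eq hnd)
  have hcm : pp.coeff m = a m := by
    rw [hpp, finset_sum_coeff]
    simp only [coeff_C_mul, coeff_X_pow, mul_ite, mul_one, mul_zero]
    rw [Finset.sum_ite_eq (Icc 1 m) m a]
    simp [hm]
  have hqm : qq.coeff m = a m := by
    rw [hqq, coeff_C_mul, ← hnd, Lagrange.nodal_monic.coeff_natDegree, mul_one]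
  have hd0 : pp - qq = 0 := by
    by_contra hne
    have hdle : (pp - qq).natDegree ≤ m := (natDegree_sub_le _ _).trans (max_le hppdeg hqqdeg)
    have hcoeffd : (pp - qq).coeff m = 0 := by rw [coeff_sub, hcm, hqm, sub_self]
    have hdlt : (pp - qq).natDegree < m := by
      rcases lt_or_eq_of_le hdle with h | h
      · exact h
      · exfalso
        apply leadingCoeff_ne_zero.mpr hne
        rw [Polynomial.leadingCoeff, h, hcoeffd]
    refine hne (eq_zero_of_natDegree_lt_card_of_eval_eq_zero _ hr (fun i => ?_)
      (by simpa using hdlt))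
    rw [eval_sub, heval, hroot i, hqq, eval_mul]
    rw [Lagrange.eval_nodal_at_node (Finset.mem_univ i)]
    ring
  have hppqq : pp = qq := sub_eq_zero.mp hd0
  rw [hppqq, hqq, derivative_C_mul, eval_mul, eval_C]
  rw [Lagrange.eval_nodal_derivative_eval_node_eq (Finset.mem_univ q), Lagrange.eval_nodal]
  refine mul_ne_zero ham (Finset.prod_ne_zero_iff.mpr fun j hj => ?_)
  exact sub_ne_zero_of_ne (hr.ne (Finset.mem_erase.mp hj).1.symm)

/-- Form preservation in the method of steps: if the characteristic polynomial
`p(X) = ∑_{h=1}^m a(h) X^h` (with `a(m) ≠ 0`) has `m` pairwise distinct real roots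
`r p`, and `g(t) = ∑_p e^{r_p t} Q_p(t)` with polynomials `Q_p`, then for every
`τ` and prescribed derivative values `v_0, …, v_{m-1}` there are polynomials `P_p`
with `deg P_p ≤ deg Q_p + 1` such that `y(t) = ∑_p e^{r_p t} P_p(t)` satisfies
`∑_{h=1}^m a(h) y^{(h)} = g` and `y^{(h)}(τ) = v_h` for `h = 0, …, m-1`. -/
theorem steps_form_preservation (m : ℕ) (hm : 1 ≤ m) (a : ℕ → ℝ) (ham : a m ≠ 0)
    (r : Fin m → ℝ) (hr : Function.Injective r)
    (hroot : ∀ p : Fin m, ∑ h ∈ Finset.Icc 1 m, a h * r p ^ h = 0)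
    (Q : Fin m → Polynomial ℝ) (τ : ℝ) (v : Fin m → ℝ) :
    ∃ P : Fin m → Polynomial ℝ,
      (∀ p, (P p).natDegree ≤ (Q p).natDegree + 1) ∧
      (∀ t : ℝ,
        ∑ h ∈ Finset.Icc 1 m,
            a h * iteratedDeriv h
              (fun s : ℝ => ∑ p : Fin m, Real.exp (r p * s) * (P p).eval s) t =
          ∑ p : Fin m, Real.exp (r p * t) * (Q p).eval t) ∧
      (∀ h : Fin m,
        iteratedDeriv h.val
          (fun s : ℝ => ∑ p : Fin m, Real.exp (r p * s) * (P p).eval s) τ = v h) := by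
  classical
  set pp : Polynomial ℝ := ∑ h ∈ Icc 1 m, C (a h) * X ^ h with hpp
  have hppdeg : pp.natDegree ≤ m := by
    refine natDegree_sum_le_of_forall_le _ _ fun h hh => ?_
    exact (natDegree_C_mul_le _ _).trans (by rw [natDegree_X_pow]; exact (mem_Icc.mp hh).2)
  have hc0 : ∀ q, (taylor (r q) pp).coeff 0 = 0 := by
    intro q
    rw [taylor_coeff_zero, hpp]
    simpa [eval_finset_sum] using hroot q
  have hc1 : ∀ q, (taylor (r q) pp).coeff 1 ≠ 0 := by
    intro q
    rw [taylor_coeff_one, hpp]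
    exact steps_char m hm a ham r hr hroot q
  -- particular solutions
  have hpart : ∀ q : Fin m, ∃ P1 : Polynomial ℝ, P1.natDegree ≤ (Q q).natDegree + 1 ∧
      (aeval (stepsU (r q)) pp) P1 = Q q := by
    intro q
    obtain ⟨P1, hdeg, heq⟩ := steps_surj m hm (fun i => (taylor (r q) pp).coeff i)
      (hc0 q) (hc1 q) (Q q).natDegree (Q q) le_rfl
    refine ⟨P1, hdeg, ?_⟩
    rw [steps_taylor m pp hppdeg (r q), LinearMap.sum_apply, ← heq]
    refine Finset.sum_congr rfl fun i _ => ?_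
    rw [LinearMap.smul_apply, Module.End.pow_apply]
    rfl
  choose P1 hP1deg hP1eq using hpart
  -- homogeneous correction via Vandermonde matrix
  set M : Matrix (Fin m) (Fin m) ℝ :=
    Matrix.of fun h p => r p ^ (h : ℕ) * Real.exp (r p * τ) with hM
  have hMdet : IsUnit M.det := by
    have hfac : M = (Matrix.vandermonde r).transpose
        * Matrix.diagonal (fun p => Real.exp (r p * τ)) := by
      ext h p
      rw [Matrix.mul_diagonal]
      simp [hM, Matrix.transpose_apply, Matrix.vandermonde_apply]
    rw [hfac, Matrix.det_mul, Matrix.det_transpose, Matrix.det_vandermonde, Matrix.det_diagonal]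
    refine isUnit_iff_ne_zero.mpr (mul_ne_zero ?_ ?_)
    · refine Finset.prod_ne_zero_iff.mpr fun i _ => Finset.prod_ne_zero_iff.mpr fun j hj => ?_
      exact sub_ne_zero_of_ne (hr.ne (Finset.mem_Ioi.mp hj).ne')
    · exact Finset.prod_ne_zero_iff.mpr fun p _ => Real.exp_ne_zero _
  obtain ⟨cs, hcs⟩ := (Matrix.mulVec_surjective_iff_isUnit.mpr
      ((Matrix.isUnit_iff_isUnit_det M).mpr hMdet))
    (fun h : Fin m =>
      v h - ∑ p : Fin m, Real.exp (r p * τ) * ((stepsU (r p) ^ (h : ℕ)) (P1 p)).eval τ)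
  refine ⟨fun p => P1 p + C (cs p), fun p => ?_, fun t => ?_, fun h => ?_⟩
  · refine (natDegree_add_le _ _).trans (max_le (hP1deg p) ?_)
    simp
  · -- differential equation
    simp only [steps_iteratedDeriv]
    have key : ∀ p : Fin m, (aeval (stepsU (r p)) pp) (P1 p + C (cs p)) = Q p := by
      intro p
      rw [map_add, hP1eq p, add_eq_left, hpp, steps_aeval_apply]
      have hterm : ∀ h : ℕ, a h • (stepsU (r p) ^ h) (C (cs p))
          = C (a h * r p ^ h * cs p) := by
        intro h
        rw [stepsU_pow_C, smul_C, smul_eq_mul, ← mul_assoc]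
      calc ∑ h ∈ Icc 1 m, a h • (stepsU (r p) ^ h) (C (cs p))
          = ∑ h ∈ Icc 1 m, C (a h * r p ^ h * cs p) := by
            exact Finset.sum_congr rfl fun h _ => hterm h
        _ = C (∑ h ∈ Icc 1 m, a h * r p ^ h * cs p) := by
            rw [← map_sum]
        _ = C ((∑ h ∈ Icc 1 m, a h * r p ^ h) * cs p) := by rw [Finset.sum_mul]
        _ = 0 := by rw [hroot p, zero_mul, map_zero]
    calc ∑ h ∈ Icc 1 m, a h *
          ∑ p : Fin m, Real.exp (r p * t) * ((stepsU (r p) ^ h) (P1 p + C (cs p))).eval t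
        = ∑ p : Fin m, Real.exp (r p * t)
            * ((aeval (stepsU (r p)) pp) (P1 p + C (cs p))).eval t := by
          simp only [Finset.mul_sum]
          rw [Finset.sum_comm]
          refine Finset.sum_congr rfl fun p _ => ?_
          rw [hpp, steps_aeval_apply, eval_finset_sum, Finset.mul_sum]
          refine Finset.sum_congr rfl fun h _ => ?_
          rw [eval_smul, smul_eq_mul]
          ring
      _ = ∑ p : Fin m, Real.exp (r p * t) * (Q p).eval t := by
          refine Finset.sum_congr rfl fun p _ => ?_
          rw [key p]
  · -- initial conditions
    simp only [steps_iteratedDeriv]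
    have hMv := congrFun hcs h
    simp only [Matrix.mulVec, dotProduct, hM, Matrix.of_apply] at hMv
    calc ∑ p : Fin m, Real.exp (r p * τ)
          * ((stepsU (r p) ^ (h : ℕ)) (P1 p + C (cs p))).eval τ
        = (∑ p : Fin m, Real.exp (r p * τ) * ((stepsU (r p) ^ (h : ℕ)) (P1 p)).eval τ)
          + ∑ p : Fin m, r p ^ (h : ℕ) * Real.exp (r p * τ) * cs p := by
          rw [← Finset.sum_add_distrib]
          refine Finset.sum_congr rfl fun p _ => ?_
          rw [map_add, stepsU_pow_C, eval_add, eval_C]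
          ring
      _ = v h := by
          rw [hMv]
          ring
end

section
/- Let t_p ≠ 0 and b₀, b₁, b₂ be real numbers, and set b₃ = b₀ - b₁/t_p + b₂/t_p², b₄ = b₁ - 2 b₂/t_p, b₅ = b₂. Let g, k, G, H : ℕ → ℝ be finitely supported sequences such that for every i ≥ 1: i·G(i) + t_p·i·(i+1)·G(i+1) = -b₀·g(i-1) - b₁·i·g(i) - b₂·i·(i+1)·g(i+1), and i·H(i) - t_p·i·(i+1)·H(i+1) = b₃·k(i-1) + b₄·i·k(i) + b₅·i·(i+1)·k(i+1). Define y₋(t) = ∑_i g(i)·t^i + e^{-t/t_p}·∑_i k(i)·t^i and y(t) = ∑_i G(i)·t^i + e^{-t/t_p}·∑_i H(i)·t^i. Then for all t ∈ ℝ: y'(t) + t_p·y''(t) = -b₀·y₋(t) - b₁·y₋'(t) - b₂·y₋''(t). -/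
open Polynomial Finset

private noncomputable def mkP (N : ℕ) (a : ℕ → ℝ) : Polynomial ℝ :=
  ∑ i ∈ Finset.range N, Polynomial.C (a i) * Polynomial.X ^ i

private lemma mkP_coeff (N : ℕ) (a : ℕ → ℝ) (ha : ∀ n, N ≤ n → a n = 0) (j : ℕ) :
    (mkP N a).coeff j = a j := by
  classical
  rw [mkP, Polynomial.finset_sum_coeff]
  simp only [Polynomial.coeff_C_mul, Polynomial.coeff_X_pow, mul_ite, mul_one, mul_zero]
  rw [Finset.sum_ite_eq (Finset.range N) j a]
  by_cases h : j ∈ Finset.range N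
  · simp [h]
  · simp only [h, if_false]
    exact (ha j (by simpa using h)).symm

private lemma mkP_eval (N : ℕ) (a : ℕ → ℝ) (t : ℝ) :
    (mkP N a).eval t = ∑ i ∈ Finset.range N, a i * t ^ i := by
  simp [mkP, Polynomial.eval_finset_sum]

/-- One step of the method of steps for the first-order plant (Example 1, case `i > 0`):
if the coefficients `G, H` of the new-interval solution `y` satisfy the stated
recursions in terms of the coefficients `g, k` of the previous-interval solution `y₋`,
then `y' + t_p y'' = -b₀ y₋ - b₁ y₋' - b₂ y₋''`. -/
theorem steps_first_order_plant (tp b0 b1 b2 b3 b4 b5 : ℝ) (htp : tp ≠ 0)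
    (hb3 : b3 = b0 - b1 / tp + b2 / tp ^ 2) (hb4 : b4 = b1 - 2 * b2 / tp) (hb5 : b5 = b2)
    (g k G H : ℕ → ℝ)
    (hg : (Function.support g).Finite) (hk : (Function.support k).Finite)
    (hG : (Function.support G).Finite) (hH : (Function.support H).Finite)
    (hGrec : ∀ i : ℕ, 1 ≤ i →
      (i : ℝ) * G i + tp * i * (i + 1) * G (i + 1) =
        -b0 * g (i - 1) - b1 * i * g i - b2 * i * (i + 1) * g (i + 1))
    (hHrec : ∀ i : ℕ, 1 ≤ i →
      (i : ℝ) * H i - tp * i * (i + 1) * H (i + 1) =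
        b3 * k (i - 1) + b4 * i * k i + b5 * i * (i + 1) * k (i + 1))
    (ym y : ℝ → ℝ)
    (hym : ym = fun t => (∑ᶠ i : ℕ, g i * t ^ i) + Real.exp (-t / tp) * ∑ᶠ i : ℕ, k i * t ^ i)
    (hy : y = fun t => (∑ᶠ i : ℕ, G i * t ^ i) + Real.exp (-t / tp) * ∑ᶠ i : ℕ, H i * t ^ i) :
    ∀ t : ℝ,
      deriv y t + tp * deriv (deriv y) t =
        -b0 * ym t - b1 * deriv ym t - b2 * deriv (deriv ym) t := by
  classical
  -- choose a common bound N for the supports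
  have hfin : (Function.support g ∪ Function.support k ∪ Function.support G ∪
      Function.support H).Finite := (((hg.union hk).union hG).union hH)
  obtain ⟨M, hM⟩ := hfin.bddAbove
  set N := M + 1 with hNdef
  have hvan : ∀ n, N ≤ n → g n = 0 ∧ k n = 0 ∧ G n = 0 ∧ H n = 0 := by
    intro n hn
    have hnot : n ∉ (Function.support g ∪ Function.support k ∪ Function.support G ∪
        Function.support H) := by
      intro hmem
      have := hM hmem
      omega
    simp only [Set.mem_union, Function.mem_support, not_or, not_not] at hnot
    exact ⟨hnot.1.1.1, hnot.1.1.2, hnot.1.2, hnot.2⟩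
  have hg0 : ∀ n, N ≤ n → g n = 0 := fun n hn => (hvan n hn).1
  have hk0 : ∀ n, N ≤ n → k n = 0 := fun n hn => (hvan n hn).2.1
  have hG0 : ∀ n, N ≤ n → G n = 0 := fun n hn => (hvan n hn).2.2.1
  have hH0 : ∀ n, N ≤ n → H n = 0 := fun n hn => (hvan n hn).2.2.2
  -- express the finsums as finite sums / polynomial evaluations
  have hsum : ∀ (a : ℕ → ℝ), (∀ n, N ≤ n → a n = 0) → ∀ t : ℝ,
      (∑ᶠ i : ℕ, a i * t ^ i) = (mkP N a).eval t := by
    intro a ha t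
    rw [mkP_eval]
    apply finsum_eq_sum_of_support_subset
    intro i hi
    simp only [Finset.coe_range, Set.mem_Iio]
    by_contra h
    exact hi (by simp [ha i (by omega)])
  -- the generic derivative computation
  have hasD : ∀ (P Q : Polynomial ℝ) (t : ℝ),
      HasDerivAt (fun s => P.eval s + Real.exp (-s / tp) * Q.eval s)
        (P.derivative.eval t +
          Real.exp (-t / tp) * (Q.derivative - tp⁻¹ • Q).eval t) t := by
    intro P Q t
    have h1 := P.hasDerivAt t
    have hlin : HasDerivAt (fun s : ℝ => -s / tp) (-tp⁻¹) t := by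
      have h0 : HasDerivAt (fun s : ℝ => s / tp) (1 / tp) t := (hasDerivAt_id' t).div_const tp
      have h0' : HasDerivAt (fun s : ℝ => -(s / tp)) (-(1 / tp)) t := h0.neg
      simpa [neg_div] using h0'
    have h2 : HasDerivAt (fun s : ℝ => Real.exp (-s / tp))
        (Real.exp (-t / tp) * -tp⁻¹) t := by
      simpa [mul_comm] using hlin.exp
    have h3 := Q.hasDerivAt t
    have this : HasDerivAt (fun s => P.eval s + Real.exp (-s / tp) * Q.eval s) _ t :=
      h1.add (h2.mul h3)
    convert this using 1
    simp only [Polynomial.eval_sub, Polynomial.eval_smul, smul_eq_mul]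
    ring
  have derivF : ∀ (P Q : Polynomial ℝ),
      deriv (fun s => P.eval s + Real.exp (-s / tp) * Q.eval s) =
        fun t => P.derivative.eval t +
          Real.exp (-t / tp) * (Q.derivative - tp⁻¹ • Q).eval t := by
    intro P Q
    funext t
    exact (hasD P Q t).deriv
  -- rewrite y and ym
  have hyF : y = fun t => (mkP N G).eval t + Real.exp (-t / tp) * (mkP N H).eval t := by
    funext t
    rw [hy]
    simp only [hsum G hG0 t, hsum H hH0 t]
  have hymF : ym = fun t => (mkP N g).eval t + Real.exp (-t / tp) * (mkP N k).eval t := by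
    funext t
    rw [hym]
    simp only [hsum g hg0 t, hsum k hk0 t]
  intro t
  rw [hyF, hymF, derivF, derivF, derivF, derivF]
  set PG := mkP N G
  set PH := mkP N H
  set Pg := mkP N g
  set Pk := mkP N k
  set Q1 : Polynomial ℝ := PH.derivative - tp⁻¹ • PH with hQ1
  set Q2 : Polynomial ℝ := Q1.derivative - tp⁻¹ • Q1 with hQ2
  set R1 : Polynomial ℝ := Pk.derivative - tp⁻¹ • Pk with hR1
  set R2 : Polynomial ℝ := R1.derivative - tp⁻¹ • R1 with hR2
  -- two polynomial identities
  have polyA : PG.derivative + tp • PG.derivative.derivative =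
      (-b0) • Pg + (-b1) • Pg.derivative + (-b2) • Pg.derivative.derivative := by
    ext j
    simp only [Polynomial.coeff_add, Polynomial.coeff_smul, Polynomial.coeff_derivative,
      smul_eq_mul, mkP_coeff N G hG0, mkP_coeff N g hg0, PG, Pg]
    have h := hGrec (j + 1) (by omega)
    push_cast at h
    push_cast
    linear_combination h
  have polyB : Q1 + tp • Q2 =
      (-b0) • Pk + (-b1) • R1 + (-b2) • R2 := by
    ext j
    simp only [hQ2, hR2, hQ1, hR1, Polynomial.coeff_add, Polynomial.coeff_sub,
      Polynomial.coeff_smul, Polynomial.coeff_derivative, smul_eq_mul,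
      mkP_coeff N H hH0, mkP_coeff N k hk0, PH, Pk]
    have h := hHrec (j + 1) (by omega)
    have hc : tp * tp⁻¹ = 1 := mul_inv_cancel₀ htp
    subst hb3 hb4 hb5
    simp only [div_eq_mul_inv, ← inv_pow] at h
    push_cast at h ⊢
    linear_combination (-1 : ℝ) * h + (tp⁻¹ * H j - 2 * ((j : ℝ) + 1) * H (j + 1)) * hc
  have evalA := congrArg (Polynomial.eval t) polyA
  have evalB := congrArg (Polynomial.eval t) polyB
  simp only [Polynomial.eval_add, Polynomial.eval_smul, smul_eq_mul] at evalA evalB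
  linear_combination evalA + Real.exp (-t / tp) * evalB
end

section
/- Let t_p ≠ 0 and τ be real numbers, let w : ℝ → ℝ be differentiable, and let G, H : ℕ → ℝ be finitely supported sequences whose values at 0 are given by G(0) = w(τ) + t_p·w'(τ) - ∑_{h≥1} (τ + t_p·h)·τ^{h-1}·G(h) - e^{-τ/t_p}·∑_{h≥1} t_p·h·τ^{h-1}·H(h) and H(0) = -t_p·e^{τ/t_p}·w'(τ) + e^{τ/t_p}·∑_{h≥1} t_p·h·τ^{h-1}·G(h) + ∑_{h≥1} (-τ + t_p·h)·τ^{h-1}·H(h). Define y(t) = ∑_i G(i)·t^i + e^{-t/t_p}·∑_i H(i)·t^i. Then y(τ) = w(τ) and y'(τ) = w'(τ). -/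
/-- Continuity conditions at an interior junction `τ` for `k > 1` (Example 1, case
`i = 0, k > 1`): with the constant coefficients `G 0`, `H 0` chosen by the stated
formulas, the new-subinterval solution `y` matches the preceding-subinterval solution
`w` and its first derivative at `τ`: `y(τ) = w(τ)` and `y'(τ) = w'(τ)`. -/
theorem steps_continuity_k_gt_one (tp τ : ℝ) (htp : tp ≠ 0)
    (w : ℝ → ℝ) (hw : Differentiable ℝ w)
    (G H : ℕ → ℝ) (hG : (Function.support G).Finite) (hH : (Function.support H).Finite)
    (hG0 : G 0 = w τ + tp * deriv w τ
        - (∑ᶠ (h : ℕ) (_ : 1 ≤ h), (τ + tp * (h : ℝ)) * τ ^ (h - 1) * G h)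
        - Real.exp (-τ / tp) * ∑ᶠ (h : ℕ) (_ : 1 ≤ h), tp * (h : ℝ) * τ ^ (h - 1) * H h)
    (hH0 : H 0 = -tp * Real.exp (τ / tp) * deriv w τ
        + Real.exp (τ / tp) * (∑ᶠ (h : ℕ) (_ : 1 ≤ h), tp * (h : ℝ) * τ ^ (h - 1) * G h)
        + ∑ᶠ (h : ℕ) (_ : 1 ≤ h), (-τ + tp * (h : ℝ)) * τ ^ (h - 1) * H h)
    (y : ℝ → ℝ)
    (hy : y = fun t => (∑ᶠ i : ℕ, G i * t ^ i) + Real.exp (-t / tp) * ∑ᶠ i : ℕ, H i * t ^ i) :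
    y τ = w τ ∧ deriv y τ = deriv w τ := by
  classical
  set S : Finset ℕ := insert 0 (hG.toFinset ∪ hH.toFinset) with hSdef
  have h0S : (0 : ℕ) ∈ S := Finset.mem_insert_self _ _
  have hGS : Function.support G ⊆ ↑S := by
    intro x hx; simp [hSdef, hG.mem_toFinset, hH.mem_toFinset]
    exact Or.inr (Or.inl hx)
  have hHS : Function.support H ⊆ ↑S := by
    intro x hx; simp [hSdef, hG.mem_toFinset, hH.mem_toFinset]
    exact Or.inr (Or.inr hx)
  set T : Finset ℕ := S.erase 0 with hTdef
  -- plain finsum conversion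
  have key1 : ∀ (K : ℕ → ℝ), Function.support K ⊆ ↑S → ∀ t : ℝ,
      (∑ᶠ i : ℕ, K i * t ^ i) = ∑ i ∈ S, K i * t ^ i := by
    intro K hK t
    apply finsum_eq_finset_sum_of_support_subset
    intro x hx
    apply hK
    intro h0
    apply hx
    simp [h0]
  -- constrained finsum conversion
  have key2 : ∀ (c K : ℕ → ℝ), Function.support K ⊆ ↑S →
      (∑ᶠ (h : ℕ) (_ : 1 ≤ h), c h * K h) = ∑ h ∈ T, c h * K h := by
    intro c K hK
    have hs : (∑ᶠ (h : ℕ) (_ : 1 ≤ h), c h * K h)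
        = ∑ h ∈ S, ∑ᶠ (_ : 1 ≤ h), c h * K h := by
      apply finsum_eq_finset_sum_of_support_subset
      intro x hx
      apply hK
      intro h0
      apply hx
      simp [h0]
    rw [hs]
    rw [← Finset.sum_erase S (a := 0) (by simp)]
    apply Finset.sum_congr rfl
    intro x hx
    rw [finsum_eq_if, if_pos (Nat.one_le_iff_ne_zero.2 (Finset.ne_of_mem_erase hx))]
  have hpow : ∀ h ∈ T, τ ^ h = τ ^ (h - 1) * τ := by
    intro h hh
    rw [← pow_succ, Nat.sub_add_cancel (Nat.one_le_iff_ne_zero.2 (Finset.ne_of_mem_erase hh))]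
  have hE : Real.exp (-τ / tp) * Real.exp (τ / tp) = 1 := by
    rw [← Real.exp_add, neg_div, neg_add_cancel, Real.exp_zero]
  -- rewrite the constrained sums in hypotheses
  rw [key2 (fun h => (τ + tp * (h : ℝ)) * τ ^ (h - 1)) G hGS,
      key2 (fun h => tp * (h : ℝ) * τ ^ (h - 1)) H hHS] at hG0
  rw [key2 (fun h => tp * (h : ℝ) * τ ^ (h - 1)) G hGS,
      key2 (fun h => (-τ + tp * (h : ℝ)) * τ ^ (h - 1)) H hHS] at hH0
  -- function with finite sums
  have hy' : y = fun t => (∑ i ∈ S, G i * t ^ i) + Real.exp (-t / tp) * ∑ i ∈ S, H i * t ^ i := by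
    funext t
    rw [hy]
    simp only [key1 G hGS, key1 H hHS]
  -- split off the 0-term
  have hQG : ∑ i ∈ S, G i * τ ^ i = G 0 + ∑ i ∈ T, G i * τ ^ i := by
    rw [← Finset.add_sum_erase S _ h0S]; norm_num; rfl
  have hQH : ∑ i ∈ S, H i * τ ^ i = H 0 + ∑ i ∈ T, H i * τ ^ i := by
    rw [← Finset.add_sum_erase S _ h0S]; norm_num; rfl
  have hDG : ∑ i ∈ S, G i * ((i : ℝ) * τ ^ (i - 1)) = ∑ i ∈ T, G i * ((i : ℝ) * τ ^ (i - 1)) :=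
    (Finset.sum_erase _ (by simp)).symm
  have hDH : ∑ i ∈ S, H i * ((i : ℝ) * τ ^ (i - 1)) = ∑ i ∈ T, H i * ((i : ℝ) * τ ^ (i - 1)) :=
    (Finset.sum_erase _ (by simp)).symm
  -- sum identities over T
  have hA1 : ∑ h ∈ T, (τ + tp * (h : ℝ)) * τ ^ (h - 1) * G h
      = ∑ h ∈ T, G h * τ ^ h + ∑ h ∈ T, tp * (h : ℝ) * τ ^ (h - 1) * G h := by
    rw [← Finset.sum_add_distrib]
    exact Finset.sum_congr rfl fun h hh => by rw [hpow h hh]; ring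
  have hA2 : ∑ h ∈ T, tp * (h : ℝ) * τ ^ (h - 1) * H h
      = ∑ h ∈ T, (-τ + tp * (h : ℝ)) * τ ^ (h - 1) * H h + ∑ h ∈ T, H h * τ ^ h := by
    rw [← Finset.sum_add_distrib]
    exact Finset.sum_congr rfl fun h hh => by rw [hpow h hh]; ring
  have hA3 : ∑ h ∈ T, tp * (h : ℝ) * τ ^ (h - 1) * G h
      = tp * ∑ h ∈ T, G h * ((h : ℝ) * τ ^ (h - 1)) := by
    rw [Finset.mul_sum]
    exact Finset.sum_congr rfl fun h hh => by ring
  have hA4 : ∑ h ∈ T, tp * (h : ℝ) * τ ^ (h - 1) * H h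
      = tp * ∑ h ∈ T, H h * ((h : ℝ) * τ ^ (h - 1)) := by
    rw [Finset.mul_sum]
    exact Finset.sum_congr rfl fun h hh => by ring
  have hA4' : ∑ h ∈ T, (-τ + tp * (h : ℝ)) * τ ^ (h - 1) * H h
      = tp * ∑ h ∈ T, H h * ((h : ℝ) * τ ^ (h - 1)) - ∑ h ∈ T, H h * τ ^ h := by
    linear_combination hA4 - hA2
  constructor
  · have : (∑ i ∈ S, G i * τ ^ i) + Real.exp (-τ / tp) * ∑ i ∈ S, H i * τ ^ i = w τ := by
      rw [hQG, hQH, hG0, hH0]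
      linear_combination -hA1 - Real.exp (-τ / tp) * hA2
        + ((∑ h ∈ T, tp * (h : ℝ) * τ ^ (h - 1) * G h) - tp * deriv w τ) * hE
    rw [hy']
    exact this
  · -- derivative computation
    have hdG : HasDerivAt (fun t : ℝ => ∑ i ∈ S, G i * t ^ i)
        (∑ i ∈ S, G i * ((i : ℝ) * τ ^ (i - 1))) τ :=
      HasDerivAt.fun_sum fun i _ => (hasDerivAt_pow i τ).const_mul (G i)
    have hdH : HasDerivAt (fun t : ℝ => ∑ i ∈ S, H i * t ^ i)
        (∑ i ∈ S, H i * ((i : ℝ) * τ ^ (i - 1))) τ :=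
      HasDerivAt.fun_sum fun i _ => (hasDerivAt_pow i τ).const_mul (H i)
    have hlin : HasDerivAt (fun t : ℝ => -t / tp) (-1 / tp) τ := by
      simpa using ((hasDerivAt_id τ).neg.div_const tp)
    have hexp : HasDerivAt (fun t : ℝ => Real.exp (-t / tp))
        (Real.exp (-τ / tp) * (-1 / tp)) τ := hlin.exp
    have hdy : HasDerivAt y
        ((∑ i ∈ S, G i * ((i : ℝ) * τ ^ (i - 1)))
          + ((Real.exp (-τ / tp) * (-1 / tp)) * (∑ i ∈ S, H i * τ ^ i)
            + Real.exp (-τ / tp) * ∑ i ∈ S, H i * ((i : ℝ) * τ ^ (i - 1)))) τ := by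
      rw [hy']
      exact hdG.add (hexp.mul hdH)
    rw [hdy.deriv, hDG, hDH, hQH, hH0, hA3, hA4']
    field_simp
    rw [neg_div] at hE
    linear_combination (tp * (deriv w τ - ∑ i ∈ T, G i * (i : ℝ) * τ ^ (i - 1))) * hE
end
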